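/- Let (X^ℓ, W^ℓ, ε_ℓ)_{ℓ∈ℕ} be the output of the IRLS-M algorithm for a linear map 𝒮 : M_{n×p} → ℂ^m and data ℳ ∈ ℂ^m. Then there exists a constant 𝒜 > 0 such that for all ℓ ∈ ℕ, 2𝒜·[𝒥(X^ℓ, W^ℓ) − 𝒥(X^{ℓ+1}, W^{ℓ+1})] ≥ ‖X^{ℓ+1} − X^ℓ‖_F², where 𝒥(X,W) = ½(‖W^{1/2}X‖_F² + ‖W^{−1/2}‖_F²). In particular, Σ_{ℓ} ‖X^{ℓ+1} − X^ℓ‖_F² < ∞ and lim_{ℓ→∞} ‖X^{ℓ+1} − X^ℓ‖_F = 0. -/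

import Mathlib

/-!
For `ℓ ≥ 1` write `W^ℓ = U diag(c)⁻¹ U*` with `c_k = max(σ_k(X^ℓ), ε_ℓ)`. One step lowers `𝒥` in
two moves. Since `X^{ℓ+1}` minimizes `‖(W^ℓ)^{1/2} Y‖_F` over the affine space `𝒮(Y) = ℳ`, which
contains `X^ℓ`, the Pythagorean identity gives
`𝒥(X^{ℓ+1}, W^ℓ) = 𝒥(X^ℓ, W^ℓ) - ½‖(W^ℓ)^{1/2}(X^{ℓ+1} - X^ℓ)‖_F²`. Replacing `W^ℓ` by `W^{ℓ+1}`
does not increase `𝒥(X^{ℓ+1}, ·)`: if `X^{ℓ+1}X^{ℓ+1}* = V diag(σ²) V*`, the moduli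
`|(U*V)_{ki}|²` form a doubly stochastic matrix, so `2𝒥(X^{ℓ+1}, W^ℓ)` is an average of the numbers
`σ_i²/c_k + c_k`, each at least `σ_i²/max(σ_i, ε_{ℓ+1}) + max(σ_i, ε_{ℓ+1})` because
`c_k ≥ ε_ℓ ≥ ε_{ℓ+1}`. Finally every `c_k ≤ 2𝒥(X^ℓ, W^ℓ) ≤ 2𝒥(X¹, W¹)`, so
`‖X^{ℓ+1} - X^ℓ‖_F² ≤ 2𝒥(X¹, W¹) ‖(W^ℓ)^{1/2}(X^{ℓ+1} - X^ℓ)‖_F²`, and the increments telescope.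
-/

open Matrix
open scoped ComplexOrder

namespace IRLSM

/-- Frobenius inner product `⟨X,Y⟩ = Tr(X Yᴴ)`. -/
noncomputable def frobInner {n p : ℕ} (X Y : Matrix (Fin n) (Fin p) ℂ) : ℂ :=
  Matrix.trace (X * Yᴴ)

/-- Frobenius norm. -/
noncomputable def frobNorm {n p : ℕ} (X : Matrix (Fin n) (Fin p) ℂ) : ℝ :=
  Real.sqrt (∑ i, ∑ j, Complex.normSq (X i j))

/-- Singular values of `X` in nonincreasing order, `sv X 0 = σ₁ ≥ sv X 1 = σ₂ ≥ …`;
indices `≥ n` give `0`. -/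
noncomputable def sv {n p : ℕ} (X : Matrix (Fin n) (Fin p) ℂ) : ℕ → ℝ :=
  fun i => ((List.ofFn fun j : Fin n =>
      Real.sqrt ((Matrix.isHermitian_mul_conjTranspose_self X).eigenvalues j)).mergeSort
      (fun a b => decide (b ≤ a))).getD i 0

/-- Nuclear norm `‖X‖_* = ∑ σᵢ(X)`. -/
noncomputable def nuclearNorm {n p : ℕ} (X : Matrix (Fin n) (Fin p) ℂ) : ℝ :=
  ∑ i : Fin n, sv X (i : ℕ)

/-- Positive square root of a positive semidefinite matrix (junk value `0` otherwise). -/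
noncomputable def matSqrt {n : ℕ} (W : Matrix (Fin n) (Fin n) ℂ) : Matrix (Fin n) (Fin n) ℂ :=
  @dite _ W.PosSemidef (Classical.dec _) (fun h => (h.1.eigenvectorUnitary : Matrix (Fin n) (Fin n) ℂ) *
    Matrix.diagonal ((↑) ∘ (√·) ∘ h.1.eigenvalues) *
    (star h.1.eigenvectorUnitary : Matrix (Fin n) (Fin n) ℂ)) (fun _ => 0)

/-- The functional `𝒥(X,W) = ½(‖W^{1/2}X‖_F² + ‖W^{-1/2}‖_F²)`. -/
noncomputable def Jfun {n p : ℕ} (X : Matrix (Fin n) (Fin p) ℂ)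
    (W : Matrix (Fin n) (Fin n) ℂ) : ℝ :=
  (frobNorm (matSqrt W * X) ^ 2 + frobNorm (matSqrt W⁻¹) ^ 2) / 2

/-- The restricted isometry constant `δ_k(𝒮)`: the smallest `δ ≥ 0` such that
`(1-δ)‖X‖_F² ≤ ‖𝒮(X)‖² ≤ (1+δ)‖X‖_F²` for all `X` of rank at most `k`. -/
noncomputable def ripConst {n p m : ℕ}
    (S : Matrix (Fin n) (Fin p) ℂ →ₗ[ℂ] (Fin m → ℂ)) (k : ℕ) : ℝ :=
  sInf {δ : ℝ | 0 ≤ δ ∧ ∀ X : Matrix (Fin n) (Fin p) ℂ, X.rank ≤ k →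
    (1 - δ) * frobNorm X ^ 2 ≤ ∑ i, Complex.normSq (S X i) ∧
      ∑ i, Complex.normSq (S X i) ≤ (1 + δ) * frobNorm X ^ 2}

/-- The rank null space property of order `k`. -/
def RNSP {n p m : ℕ} (S : Matrix (Fin n) (Fin p) ℂ →ₗ[ℂ] (Fin m → ℂ)) (k : ℕ) : Prop :=
  ∀ H : Matrix (Fin n) (Fin p) ℂ, S H = 0 → H ≠ 0 →
    ∀ H₁ H₂ : Matrix (Fin n) (Fin p) ℂ, H = H₁ + H₂ → H₁.rank ≤ k →
      nuclearNorm H₁ < nuclearNorm H₂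

/-- The strong rank null space property of order `k` with constant `η`. -/
def SRNSP {n p m : ℕ} (S : Matrix (Fin n) (Fin p) ℂ →ₗ[ℂ] (Fin m → ℂ)) (k : ℕ) (η : ℝ) : Prop :=
  ∀ X : Matrix (Fin n) (Fin p) ℂ, S X = 0 → X ≠ 0 →
    ∀ X₁ X₂ : Matrix (Fin n) (Fin p) ℂ, X = X₁ + X₂ → X₁.rank ≤ k →
      ∃ H₁ H₂ : Matrix (Fin n) (Fin p) ℂ, X = H₁ + H₂ ∧ H₁.rank ≤ 2 * k ∧
        frobInner H₁ H₂ = 0 ∧ X₁ * H₂ᴴ = 0 ∧ X₁ᴴ * H₂ = 0 ∧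
        nuclearNorm H₁ ≤ η * nuclearNorm H₂

/-- Best `k`-rank approximation error in the nuclear norm, `ρ_k(X)_*`. -/
noncomputable def rhoNuc {n p : ℕ} (k : ℕ) (X : Matrix (Fin n) (Fin p) ℂ) : ℝ :=
  sInf ((fun Z => nuclearNorm (X - Z)) '' {Z : Matrix (Fin n) (Fin p) ℂ | Z.rank ≤ k})

/-- `j^ε(u) = |u|` for `|u| ≥ ε` and `(u² + ε²)/(2ε)` otherwise. -/
noncomputable def jeps (ε u : ℝ) : ℝ :=
  if ε ≤ |u| then |u| else (u ^ 2 + ε ^ 2) / (2 * ε)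

/-- The functional `𝒥_ε(X) = ∑ᵢ j^ε(σᵢ(X))`. -/
noncomputable def Jeps {n p : ℕ} (ε : ℝ) (X : Matrix (Fin n) (Fin p) ℂ) : ℝ :=
  ∑ i : Fin n, jeps ε (sv X (i : ℕ))

/-- `(X^ℓ, W^ℓ, ε_ℓ)_ℓ` is an output of the IRLS-M algorithm with measurement map `S`,
data `M`, parameters `γ > 0` and `K`.  Here `X (ℓ+1)` is the weighted least squares
minimizer for the weight `W ℓ`, `ε (ℓ+1) = min (ε ℓ) (γ σ_{K+1}(X^{ℓ+1}))`, and
`W (ℓ+1)` is built from an eigendecomposition of `X^{ℓ+1}(X^{ℓ+1})ᴴ` together with the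
`ε`-stabilization of the singular values.  If `ε` reaches `0` the algorithm stops. -/
structure IsIRLSM {n p m : ℕ} (S : Matrix (Fin n) (Fin p) ℂ →ₗ[ℂ] (Fin m → ℂ))
    (M : Fin m → ℂ) (γ : ℝ) (K : ℕ)
    (X : ℕ → Matrix (Fin n) (Fin p) ℂ)
    (W : ℕ → Matrix (Fin n) (Fin n) ℂ)
    (ε : ℕ → ℝ) : Prop where
  w_init : W 0 = 1
  eps_init : ε 0 = 1
  x_feasible : ∀ ℓ : ℕ, ε ℓ ≠ 0 → S (X (ℓ + 1)) = M
  x_min : ∀ ℓ : ℕ, ε ℓ ≠ 0 → ∀ Y : Matrix (Fin n) (Fin p) ℂ, S Y = M →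
    frobNorm (matSqrt (W ℓ) * X (ℓ + 1)) ^ 2 ≤ frobNorm (matSqrt (W ℓ) * Y) ^ 2
  eps_update : ∀ ℓ : ℕ, ε ℓ ≠ 0 → ε (ℓ + 1) = min (ε ℓ) (γ * sv (X (ℓ + 1)) K)
  w_update : ∀ ℓ : ℕ, ε ℓ ≠ 0 → ε (ℓ + 1) ≠ 0 →
    ∃ U : Matrix (Fin n) (Fin n) ℂ, U * Uᴴ = 1 ∧ Uᴴ * U = 1 ∧
      X (ℓ + 1) * (X (ℓ + 1))ᴴ =
        U * Matrix.diagonal (fun i : Fin n => ((sv (X (ℓ + 1)) (i : ℕ) : ℂ)) ^ 2) * Uᴴ ∧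
      W (ℓ + 1) =
        U * Matrix.diagonal
            (fun i : Fin n => (((max (sv (X (ℓ + 1)) (i : ℕ)) (ε (ℓ + 1)) : ℝ) : ℂ))⁻¹) * Uᴴ
  w_stop : ∀ ℓ : ℕ, ε ℓ ≠ 0 → ε (ℓ + 1) = 0 → W (ℓ + 1) = W ℓ
  stopped : ∀ ℓ : ℕ, ε ℓ = 0 → X (ℓ + 1) = X ℓ ∧ W (ℓ + 1) = W ℓ ∧ ε (ℓ + 1) = 0

theorem real_inner_eq_zero_of_forall_norm_sq_le {F : Type*} [NormedAddCommGroup F]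
    [InnerProductSpace ℝ F] {x w : F} (h : ∀ t : ℝ, ‖x‖ ^ 2 ≤ ‖x + t • w‖ ^ 2) :
    inner ℝ x w = 0 := by
  have hquad : ∀ t : ℝ, 0 ≤ ‖w‖ ^ 2 * (t * t) + 2 * inner ℝ x w * t + 0 := by
    intro t
    have := h t
    rw [norm_add_sq_real, norm_smul, inner_smul_right, Real.norm_eq_abs, mul_pow, sq_abs] at this
    linarith
  have := discrim_le_zero hquad
  rw [discrim] at this
  nlinarith [sq_nonneg (inner ℝ x w)]

theorem summable_of_le_mul_sub_succ {f g : ℕ → ℝ} {C : ℝ} (hC : 0 ≤ C) (hf : ∀ ℓ, 0 ≤ f ℓ)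
    (hg : ∀ ℓ, 0 ≤ g ℓ) (h : ∀ ℓ, f ℓ ≤ C * (g ℓ - g (ℓ + 1))) : Summable f := by
  refine summable_of_sum_range_le (c := C * g 0) hf fun N => ?_
  calc ∑ i ∈ Finset.range N, f i ≤ ∑ i ∈ Finset.range N, C * (g i - g (i + 1)) :=
        Finset.sum_le_sum fun i _ => h i
    _ = C * (g 0 - g N) := by rw [← Finset.mul_sum, Finset.sum_range_sub']
    _ ≤ C * g 0 := by nlinarith [hg N]

/-- `t ↦ σ²/t + t` is minimal at `t = σ` and increasing beyond it. -/
theorem sq_div_max_add_max_le {σ ε c : ℝ} (hσ : 0 ≤ σ) (hε : 0 < ε) (hc : ε ≤ c) :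
    σ ^ 2 / max σ ε + max σ ε ≤ σ ^ 2 / c + c := by
  have hc0 : 0 < c := hε.trans_le hc
  rcases le_total ε σ with hεσ | hσε
  · rw [max_eq_left hεσ, sq, mul_self_div_self, div_add' _ _ _ hc0.ne', le_div_iff₀ hc0]
    nlinarith [sq_nonneg (σ - c)]
  · rw [max_eq_right hσε, div_add' _ _ _ hε.ne', div_add' _ _ _ hc0.ne',
      div_le_div_iff₀ hε hc0]
    have hσ2 : σ ^ 2 ≤ ε * c := by nlinarith
    nlinarith [mul_nonneg (sub_nonneg.2 hc) (sub_nonneg.2 hσ2)]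

theorem mul_conjTranspose_self_apply_self {ι κ : Type*} [Fintype κ] (Z : Matrix ι κ ℂ) (k : ι) :
    (Z * Zᴴ) k k = ((∑ j, Complex.normSq (Z k j) : ℝ) : ℂ) := by
  simp [mul_apply, Complex.mul_conj]

section UnitaryConj

variable {ι κ : Type*} [Fintype ι] [DecidableEq ι] [Fintype κ] {U : Matrix ι ι ℂ}

theorem conj_diagonal_mul_conj_diagonal (hU : U ∈ unitaryGroup ι ℂ) (v w : ι → ℂ) :
    U * diagonal v * Uᴴ * (U * diagonal w * Uᴴ) = U * diagonal (v * w) * Uᴴ := by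
  have hUU : Uᴴ * U = 1 := Unitary.star_mul_self_of_mem hU
  simp only [Matrix.mul_assoc]
  rw [← Matrix.mul_assoc Uᴴ U, hUU, Matrix.one_mul, ← Matrix.mul_assoc (diagonal v),
    diagonal_mul_diagonal]
  rfl

theorem trace_conj_diagonal (hU : U ∈ unitaryGroup ι ℂ) (v : ι → ℂ) :
    trace (U * diagonal v * Uᴴ) = ∑ i, v i := by
  have hUU : Uᴴ * U = 1 := Unitary.star_mul_self_of_mem hU
  rw [trace_mul_cycle, hUU, Matrix.one_mul, trace_diagonal]

theorem inv_conj_diagonal (hU : U ∈ unitaryGroup ι ℂ) {v : ι → ℂ} (hv : ∀ i, v i ≠ 0) :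
    (U * diagonal v * Uᴴ)⁻¹ = U * diagonal v⁻¹ * Uᴴ := by
  refine inv_eq_right_inv ?_
  have hvv : v * v⁻¹ = 1 := funext fun i => mul_inv_cancel₀ (hv i)
  rw [conj_diagonal_mul_conj_diagonal hU, hvv, Pi.one_def, diagonal_one, Matrix.mul_one]
  exact Unitary.mul_star_self_of_mem hU

theorem posSemidef_conj_diagonal (U : Matrix ι ι ℂ) {d : ι → ℝ} (hd : ∀ i, 0 ≤ d i) :
    (U * diagonal (fun i => (d i : ℂ)) * Uᴴ).PosSemidef :=
  (posSemidef_diagonal_iff.mpr fun i => Complex.zero_le_real.mpr (hd i)).mul_mul_conjTranspose_same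
    U

theorem sum_normSq_apply_eq_one (hU : U ∈ unitaryGroup ι ℂ) (k : ι) :
    ∑ i, Complex.normSq (U k i) = 1 := by
  have hUU : U * Uᴴ = 1 := Unitary.mul_star_self_of_mem hU
  have hk := congrFun (congrFun hUU k) k
  rw [mul_conjTranspose_self_apply_self, one_apply_eq] at hk
  exact_mod_cast hk

theorem sum_normSq_apply_left_eq_one (hU : U ∈ unitaryGroup ι ℂ) (i : ι) :
    ∑ k, Complex.normSq (U k i) = 1 := by
  simpa [star_eq_conjTranspose, conjTranspose_apply, Complex.normSq_conj] using
    sum_normSq_apply_eq_one (Unitary.star_mem hU) i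

theorem re_trace_conj_diagonal_inv_mul_self (U : Matrix ι ι ℂ) (c : ι → ℝ) (Y : Matrix ι κ ℂ) :
    (trace (U * diagonal (fun k => (c k : ℂ)⁻¹) * Uᴴ * (Y * Yᴴ))).re =
      ∑ k, (c k)⁻¹ * ∑ j, Complex.normSq ((Uᴴ * Y) k j) := by
  have hcycle : trace (U * diagonal (fun k => (c k : ℂ)⁻¹) * Uᴴ * (Y * Yᴴ)) =
      trace (diagonal (fun k => (c k : ℂ)⁻¹) * ((Uᴴ * Y) * (Uᴴ * Y)ᴴ)) := by
    rw [conjTranspose_mul, conjTranspose_conjTranspose]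
    simp only [Matrix.mul_assoc]
    rw [trace_mul_comm U]
    simp only [Matrix.mul_assoc]
  rw [hcycle]
  simp only [trace, diag_apply, diagonal_mul, mul_conjTranspose_self_apply_self]
  norm_cast

theorem re_trace_conj_diagonal_inv_mul_conj_diagonal {V : Matrix ι ι ℂ} (c σ : ι → ℝ) :
    (trace (U * diagonal (fun k => (c k : ℂ)⁻¹) * Uᴴ *
        (V * diagonal (fun i => (σ i : ℂ) ^ 2) * Vᴴ))).re =
      ∑ k, ∑ i, Complex.normSq ((Uᴴ * V) k i) * (σ i ^ 2 / c k) := by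
  have hsq : V * diagonal (fun i => (σ i : ℂ) ^ 2) * Vᴴ =
      (V * diagonal (fun i => (σ i : ℂ))) * (V * diagonal (fun i => (σ i : ℂ)))ᴴ := by
    rw [conjTranspose_mul, diagonal_conjTranspose]
    simp only [Matrix.mul_assoc]
    rw [← Matrix.mul_assoc (diagonal _) (diagonal _), diagonal_mul_diagonal]
    congr 3
    funext i
    simp [sq]
  rw [hsq, re_trace_conj_diagonal_inv_mul_self, ← Matrix.mul_assoc]
  refine Finset.sum_congr rfl fun k _ => ?_
  rw [Finset.mul_sum]
  refine Finset.sum_congr rfl fun i _ => ?_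
  rw [mul_diagonal, Complex.normSq_mul, Complex.normSq_ofReal]
  ring

end UnitaryConj

section FrobNorm

variable {n p : ℕ}

theorem frobNorm_nonneg (X : Matrix (Fin n) (Fin p) ℂ) : 0 ≤ frobNorm X :=
  Real.sqrt_nonneg _

theorem frobNorm_sq (X : Matrix (Fin n) (Fin p) ℂ) :
    frobNorm X ^ 2 = ∑ i, ∑ j, Complex.normSq (X i j) :=
  Real.sq_sqrt (Finset.sum_nonneg fun _ _ => Finset.sum_nonneg fun _ _ => Complex.normSq_nonneg _)

theorem frobNorm_eq_norm (X : Matrix (Fin n) (Fin p) ℂ) :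
    frobNorm X = ‖(WithLp.toLp 2 (fun ij => X ij.1 ij.2) : EuclideanSpace ℂ (Fin n × Fin p))‖ := by
  rw [EuclideanSpace.norm_eq, frobNorm, Fintype.sum_prod_type]
  simp [Complex.normSq_eq_norm_sq]

theorem frobNorm_sq_eq_re_trace (X : Matrix (Fin n) (Fin p) ℂ) :
    frobNorm X ^ 2 = (trace (X * Xᴴ)).re := by
  simp only [frobNorm_sq, trace, diag_apply, mul_conjTranspose_self_apply_self]
  norm_cast

theorem frobNorm_sub_comm (X Y : Matrix (Fin n) (Fin p) ℂ) :
    frobNorm (X - Y) = frobNorm (Y - X) := by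
  rw [← neg_sub Y X]
  simp only [frobNorm, Matrix.neg_apply, Complex.normSq_neg]

theorem frobNorm_unitary_mul {U : Matrix (Fin n) (Fin n) ℂ} (hU : U ∈ unitaryGroup (Fin n) ℂ)
    (X : Matrix (Fin n) (Fin p) ℂ) : frobNorm (U * X) = frobNorm X := by
  have hUU : Uᴴ * U = 1 := Unitary.star_mul_self_of_mem hU
  rw [← sq_eq_sq₀ (frobNorm_nonneg _) (frobNorm_nonneg _), frobNorm_sq_eq_re_trace,
    frobNorm_sq_eq_re_trace, conjTranspose_mul,
    show U * X * (Xᴴ * Uᴴ) = U * (X * Xᴴ * Uᴴ) by simp only [Matrix.mul_assoc],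
    trace_mul_comm, Matrix.mul_assoc, hUU, Matrix.mul_one]

theorem frobNorm_mul_sq_eq_add_of_forall_le {q m : ℕ} (B : Matrix (Fin q) (Fin n) ℂ)
    {S : Matrix (Fin n) (Fin p) ℂ →ₗ[ℂ] (Fin m → ℂ)} {M : Fin m → ℂ}
    {X₀ X₁ : Matrix (Fin n) (Fin p) ℂ} (h₀ : S X₀ = M) (h₁ : S X₁ = M)
    (hmin : ∀ Y, S Y = M → frobNorm (B * X₁) ^ 2 ≤ frobNorm (B * Y) ^ 2) :
    frobNorm (B * X₀) ^ 2 = frobNorm (B * X₁) ^ 2 + frobNorm (B * (X₀ - X₁)) ^ 2 := by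
  let e : Matrix (Fin q) (Fin p) ℂ → EuclideanSpace ℂ (Fin q × Fin p) :=
    fun Z => WithLp.toLp 2 (fun ij => Z ij.1 ij.2)
  have hnorm : ∀ Z, frobNorm Z = ‖e Z‖ := frobNorm_eq_norm
  have he : ∀ t : ℝ, e (B * (X₁ + (t : ℂ) • (X₀ - X₁))) = e (B * X₁) + t • e (B * (X₀ - X₁)) := by
    intro t
    ext ⟨i, j⟩
    simp [e, Matrix.mul_add, Complex.real_smul]
  have horth : inner ℝ (e (B * X₁)) (e (B * (X₀ - X₁))) = 0 := by
    refine real_inner_eq_zero_of_forall_norm_sq_le fun t => ?_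
    rw [← he, ← hnorm, ← hnorm]
    refine hmin _ ?_
    rw [map_add, map_smul, map_sub, h₀, h₁, sub_self, smul_zero, add_zero]
  have hsplit : e (B * X₀) = e (B * X₁) + e (B * (X₀ - X₁)) := by
    simpa using he 1
  rw [hnorm, hnorm, hnorm, sq, sq, sq, hsplit]
  exact norm_add_sq_eq_norm_sq_add_norm_sq_real horth

end FrobNorm

section MatSqrt

variable {n p : ℕ} {W : Matrix (Fin n) (Fin n) ℂ}

theorem matSqrt_eq (h : W.PosSemidef) :
    matSqrt W = (h.1.eigenvectorUnitary : Matrix (Fin n) (Fin n) ℂ) *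
      diagonal (fun i => ((√(h.1.eigenvalues i) : ℝ) : ℂ)) *
      (h.1.eigenvectorUnitary : Matrix (Fin n) (Fin n) ℂ)ᴴ := by
  rw [matSqrt, dif_pos h, star_eq_conjTranspose]
  rfl

theorem matSqrt_mul_self (h : W.PosSemidef) : matSqrt W * matSqrt W = W := by
  rw [matSqrt_eq h, conj_diagonal_mul_conj_diagonal h.1.eigenvectorUnitary.2]
  conv_rhs => rw [h.1.spectral_theorem, Unitary.conjStarAlgAut_apply, star_eq_conjTranspose]
  congr 3
  funext i
  simp [← Complex.ofReal_mul, Real.mul_self_sqrt (h.eigenvalues_nonneg i)]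

theorem conjTranspose_matSqrt (h : W.PosSemidef) : (matSqrt W)ᴴ = matSqrt W := by
  rw [matSqrt_eq h]
  simp [Matrix.mul_assoc, Pi.star_def]

theorem frobNorm_matSqrt_mul_sq (h : W.PosSemidef) (X : Matrix (Fin n) (Fin p) ℂ) :
    frobNorm (matSqrt W * X) ^ 2 = (trace (W * (X * Xᴴ))).re := by
  rw [frobNorm_sq_eq_re_trace, conjTranspose_mul, conjTranspose_matSqrt h, ← Matrix.mul_assoc,
    trace_mul_comm, ← Matrix.mul_assoc, ← Matrix.mul_assoc, matSqrt_mul_self h, Matrix.mul_assoc]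

theorem frobNorm_matSqrt_sq (h : W.PosSemidef) : frobNorm (matSqrt W) ^ 2 = (trace W).re := by
  rw [frobNorm_sq_eq_re_trace, conjTranspose_matSqrt h, matSqrt_mul_self h]

end MatSqrt

section Jfun

variable {n p : ℕ} {U : Matrix (Fin n) (Fin n) ℂ} {c : Fin n → ℝ}

theorem Jfun_nonneg (X : Matrix (Fin n) (Fin p) ℂ) (W : Matrix (Fin n) (Fin n) ℂ) :
    0 ≤ Jfun X W := by
  unfold Jfun
  positivity

theorem posSemidef_conj_diagonal_inv (U : Matrix (Fin n) (Fin n) ℂ) (hc : ∀ k, 0 < c k) :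
    (U * diagonal (fun k => (c k : ℂ)⁻¹) * Uᴴ).PosSemidef := by
  simpa using posSemidef_conj_diagonal U (d := fun k => (c k)⁻¹) fun k => (inv_pos.2 (hc k)).le

theorem frobNorm_matSqrt_inv_sq (hU : U ∈ unitaryGroup (Fin n) ℂ) (hc : ∀ k, 0 < c k) :
    frobNorm (matSqrt (U * diagonal (fun k => (c k : ℂ)⁻¹) * Uᴴ)⁻¹) ^ 2 = ∑ k, c k := by
  have hinv : (U * diagonal (fun k => (c k : ℂ)⁻¹) * Uᴴ)⁻¹ =
      U * diagonal (fun k => (c k : ℂ)) * Uᴴ := by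
    rw [inv_conj_diagonal hU fun k => inv_ne_zero (Complex.ofReal_ne_zero.2 (hc k).ne')]
    congr 3
    funext k
    simp
  rw [hinv, frobNorm_matSqrt_sq (posSemidef_conj_diagonal U fun k => (hc k).le),
    trace_conj_diagonal hU, ← Complex.ofReal_sum, Complex.ofReal_re]

theorem Jfun_conj_diagonal_inv (hU : U ∈ unitaryGroup (Fin n) ℂ) (hc : ∀ k, 0 < c k)
    (X : Matrix (Fin n) (Fin p) ℂ) :
    Jfun X (U * diagonal (fun k => (c k : ℂ)⁻¹) * Uᴴ) =
      ((trace (U * diagonal (fun k => (c k : ℂ)⁻¹) * Uᴴ * (X * Xᴴ))).re + ∑ k, c k) / 2 := by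
  rw [Jfun, frobNorm_matSqrt_mul_sq (posSemidef_conj_diagonal_inv U hc),
    frobNorm_matSqrt_inv_sq hU hc]

theorem le_two_mul_Jfun (hU : U ∈ unitaryGroup (Fin n) ℂ) (hc : ∀ k, 0 < c k)
    (X : Matrix (Fin n) (Fin p) ℂ) (k : Fin n) :
    c k ≤ 2 * Jfun X (U * diagonal (fun k => (c k : ℂ)⁻¹) * Uᴴ) := by
  have hk := Finset.single_le_sum (fun i _ => (hc i).le) (Finset.mem_univ k)
  rw [Jfun, frobNorm_matSqrt_inv_sq hU hc]
  nlinarith [sq_nonneg (frobNorm (matSqrt (U * diagonal (fun k => (c k : ℂ)⁻¹) * Uᴴ) * X))]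

theorem frobNorm_sq_le_mul_frobNorm_matSqrt_mul_sq (hU : U ∈ unitaryGroup (Fin n) ℂ)
    (hc : ∀ k, 0 < c k) {A : ℝ} (hA : ∀ k, c k ≤ A) (Y : Matrix (Fin n) (Fin p) ℂ) :
    frobNorm Y ^ 2 ≤
      A * frobNorm (matSqrt (U * diagonal (fun k => (c k : ℂ)⁻¹) * Uᴴ) * Y) ^ 2 := by
  rw [frobNorm_matSqrt_mul_sq (posSemidef_conj_diagonal_inv U hc),
    re_trace_conj_diagonal_inv_mul_self, ← frobNorm_unitary_mul (Unitary.star_mem hU) Y,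
    frobNorm_sq, Finset.mul_sum]
  refine Finset.sum_le_sum fun k _ => ?_
  rw [← mul_assoc]
  refine le_mul_of_one_le_left (Finset.sum_nonneg fun j _ => Complex.normSq_nonneg _) ?_
  rw [← div_eq_mul_inv, one_le_div (hc k)]
  exact hA k

theorem Jfun_stabilized_le {V : Matrix (Fin n) (Fin n) ℂ} (hU : U ∈ unitaryGroup (Fin n) ℂ)
    (hV : V ∈ unitaryGroup (Fin n) ℂ) {σ : Fin n → ℝ} {ε : ℝ} (hε : 0 < ε) (hc : ∀ k, ε ≤ c k)
    (hσ : ∀ i, 0 ≤ σ i) {X : Matrix (Fin n) (Fin p) ℂ}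
    (hX : X * Xᴴ = V * diagonal (fun i => (σ i : ℂ) ^ 2) * Vᴴ) :
    Jfun X (V * diagonal (fun i => ((max (σ i) ε : ℝ) : ℂ)⁻¹) * Vᴴ) ≤
      Jfun X (U * diagonal (fun k => (c k : ℂ)⁻¹) * Uᴴ) := by
  set m : Fin n → ℝ := fun i => max (σ i) ε
  -- `q` is doubly stochastic, since `Uᴴ * V` is unitary.
  set q : Fin n → Fin n → ℝ := fun k i => Complex.normSq ((Uᴴ * V) k i)
  have hVV : Vᴴ * V = 1 := Unitary.star_mul_self_of_mem hV
  have hq : Uᴴ * V ∈ unitaryGroup (Fin n) ℂ := mul_mem (Unitary.star_mem hU) hV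
  rw [Jfun_conj_diagonal_inv hV (c := m) fun i => hε.trans_le (le_max_right _ _),
    Jfun_conj_diagonal_inv hU fun k => hε.trans_le (hc k), hX,
    re_trace_conj_diagonal_inv_mul_conj_diagonal, re_trace_conj_diagonal_inv_mul_conj_diagonal,
    hVV]
  have hdiag : ∑ k, ∑ i, Complex.normSq ((1 : Matrix (Fin n) (Fin n) ℂ) k i) * (σ i ^ 2 / m k) =
      ∑ i, σ i ^ 2 / m i := by
    simp [one_apply]
  rw [hdiag, ← Finset.sum_add_distrib]
  gcongr
  calc ∑ i, (σ i ^ 2 / m i + m i)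
      = ∑ i, ∑ k, q k i * (σ i ^ 2 / m i + m i) := by
        simp only [← Finset.sum_mul, q, sum_normSq_apply_left_eq_one hq, one_mul]
    _ ≤ ∑ i, ∑ k, q k i * (σ i ^ 2 / c k + c k) := by
        refine Finset.sum_le_sum fun i _ => Finset.sum_le_sum fun k _ => ?_
        exact mul_le_mul_of_nonneg_left (sq_div_max_add_max_le (hσ i) hε (hc k))
          (Complex.normSq_nonneg _)
    _ = ∑ k, ∑ i, q k i * (σ i ^ 2 / c k) + ∑ k, c k := by
        rw [Finset.sum_comm, ← Finset.sum_add_distrib]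
        refine Finset.sum_congr rfl fun k _ => ?_
        simp only [mul_add, Finset.sum_add_distrib, ← Finset.sum_mul, q,
          sum_normSq_apply_eq_one hq, one_mul]

end Jfun

theorem sv_nonneg {n p : ℕ} (X : Matrix (Fin n) (Fin p) ℂ) (i : ℕ) : 0 ≤ sv X i := by
  have key : ∀ l : List ℝ, (∀ a ∈ l, 0 ≤ a) → 0 ≤ l.getD i 0 := by
    intro l hl
    rw [List.getD_eq_getElem?_getD]
    cases h : l[i]? with
    | none => exact le_rfl
    | some a => exact hl a (List.mem_of_getElem? h)
  refine key _ fun a ha => ?_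
  obtain ⟨j, rfl⟩ := List.mem_ofFn.1 ((List.mergeSort_perm _ _).mem_iff.1 ha)
  exact Real.sqrt_nonneg _

namespace IsIRLSM

variable {n p m : ℕ} {S : Matrix (Fin n) (Fin p) ℂ →ₗ[ℂ] (Fin m → ℂ)} {M : Fin m → ℂ} {γ : ℝ}
  {K : ℕ} {X : ℕ → Matrix (Fin n) (Fin p) ℂ} {W : ℕ → Matrix (Fin n) (Fin n) ℂ} {ε : ℕ → ℝ}

theorem eps_nonneg (halg : IsIRLSM S M γ K X W ε) (hγ : 0 ≤ γ) (ℓ : ℕ) : 0 ≤ ε ℓ := by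
  induction ℓ with
  | zero => rw [halg.eps_init]; exact zero_le_one
  | succ ℓ ih =>
    by_cases hℓ : ε ℓ = 0
    · rw [(halg.stopped ℓ hℓ).2.2]
    · rw [halg.eps_update ℓ hℓ]
      exact le_min ih (mul_nonneg hγ (sv_nonneg _ _))

theorem eps_succ_le (halg : IsIRLSM S M γ K X W ε) (ℓ : ℕ) : ε (ℓ + 1) ≤ ε ℓ := by
  by_cases hℓ : ε ℓ = 0
  · rw [(halg.stopped ℓ hℓ).2.2, hℓ]
  · rw [halg.eps_update ℓ hℓ]
    exact min_le_left _ _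

theorem eps_ne_zero_of_succ (halg : IsIRLSM S M γ K X W ε) {ℓ : ℕ} (h : ε (ℓ + 1) ≠ 0) :
    ε ℓ ≠ 0 :=
  fun hℓ => h (halg.stopped ℓ hℓ).2.2

theorem exists_weight_eq (halg : IsIRLSM S M γ K X W ε) (hγ : 0 ≤ γ) {ℓ : ℕ}
    (hℓ : ε (ℓ + 1) ≠ 0) :
    ∃ U ∈ unitaryGroup (Fin n) ℂ,
      X (ℓ + 1) * (X (ℓ + 1))ᴴ =
        U * diagonal (fun i : Fin n => ((sv (X (ℓ + 1)) (i : ℕ) : ℂ)) ^ 2) * Uᴴ ∧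
      W (ℓ + 1) = U * diagonal
        (fun i : Fin n => (((max (sv (X (ℓ + 1)) (i : ℕ)) (ε (ℓ + 1)) : ℝ) : ℂ))⁻¹) * Uᴴ ∧
      0 < ε (ℓ + 1) := by
  obtain ⟨U, hU, -, hX, hW⟩ := halg.w_update ℓ (halg.eps_ne_zero_of_succ hℓ) hℓ
  exact ⟨U, mem_unitaryGroup_iff.2 hU, hX, hW, (halg.eps_nonneg hγ _).lt_of_ne' hℓ⟩

theorem Jfun_weight_update_le (halg : IsIRLSM S M γ K X W ε) (hγ : 0 ≤ γ) {ℓ : ℕ}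
    (hℓ : ε (ℓ + 1) ≠ 0) :
    Jfun (X (ℓ + 2)) (W (ℓ + 2)) ≤ Jfun (X (ℓ + 2)) (W (ℓ + 1)) := by
  by_cases hℓ' : ε (ℓ + 2) = 0
  · rw [halg.w_stop (ℓ + 1) hℓ hℓ']
  obtain ⟨U, hU, -, hW, -⟩ := halg.exists_weight_eq hγ hℓ
  obtain ⟨V, hV, hX', hW', hε'⟩ := halg.exists_weight_eq hγ hℓ'
  rw [hW, hW']
  exact Jfun_stabilized_le hU hV hε'
    (fun k => (halg.eps_succ_le (ℓ + 1)).trans (le_max_right _ _)) (fun i => sv_nonneg _ _) hX'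

theorem Jfun_add_frobNorm_sq (halg : IsIRLSM S M γ K X W ε) {ℓ : ℕ} (hℓ : ε (ℓ + 1) ≠ 0) :
    Jfun (X (ℓ + 2)) (W (ℓ + 1)) +
        frobNorm (matSqrt (W (ℓ + 1)) * (X (ℓ + 1) - X (ℓ + 2))) ^ 2 / 2 =
      Jfun (X (ℓ + 1)) (W (ℓ + 1)) := by
  have h := frobNorm_mul_sq_eq_add_of_forall_le (matSqrt (W (ℓ + 1)))
    (halg.x_feasible ℓ (halg.eps_ne_zero_of_succ hℓ)) (halg.x_feasible (ℓ + 1) hℓ)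
    (halg.x_min (ℓ + 1) hℓ)
  unfold Jfun
  linarith

theorem Jfun_succ_le (halg : IsIRLSM S M γ K X W ε) (hγ : 0 ≤ γ) (ℓ : ℕ) :
    Jfun (X (ℓ + 2)) (W (ℓ + 2)) ≤ Jfun (X (ℓ + 1)) (W (ℓ + 1)) := by
  by_cases hℓ : ε (ℓ + 1) = 0
  · obtain ⟨hX, hW, -⟩ := halg.stopped (ℓ + 1) hℓ
    rw [hX, hW]
  have h := halg.Jfun_add_frobNorm_sq hℓ
  linarith [halg.Jfun_weight_update_le hγ hℓ,
    sq_nonneg (frobNorm (matSqrt (W (ℓ + 1)) * (X (ℓ + 1) - X (ℓ + 2))))]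

theorem frobNorm_sub_sq_le (halg : IsIRLSM S M γ K X W ε) (hγ : 0 ≤ γ) (ℓ : ℕ) :
    frobNorm (X (ℓ + 2) - X (ℓ + 1)) ^ 2 ≤
      2 * Jfun (X (ℓ + 1)) (W (ℓ + 1)) *
        (2 * (Jfun (X (ℓ + 1)) (W (ℓ + 1)) - Jfun (X (ℓ + 2)) (W (ℓ + 2)))) := by
  by_cases hℓ : ε (ℓ + 1) = 0
  · obtain ⟨hX, hW, -⟩ := halg.stopped (ℓ + 1) hℓ
    rw [hX, hW, sub_self, sub_self, mul_zero, mul_zero]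
    simp [frobNorm]
  obtain ⟨U, hU, -, hW, hε⟩ := halg.exists_weight_eq hγ hℓ
  have hc : ∀ k : Fin n, 0 < max (sv (X (ℓ + 1)) k) (ε (ℓ + 1)) :=
    fun k => hε.trans_le (le_max_right _ _)
  have hbound := frobNorm_sq_le_mul_frobNorm_matSqrt_mul_sq hU hc
    (le_two_mul_Jfun hU hc (X (ℓ + 1))) (X (ℓ + 1) - X (ℓ + 2))
  rw [← hW] at hbound
  have hdecr := halg.Jfun_add_frobNorm_sq hℓ
  have hJ := Jfun_nonneg (X (ℓ + 1)) (W (ℓ + 1))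
  rw [frobNorm_sub_comm]
  refine hbound.trans (mul_le_mul_of_nonneg_left ?_ (by linarith))
  linarith [halg.Jfun_weight_update_le hγ hℓ]

end IsIRLSM

theorem statement7_general {n p m : ℕ}
    (S : Matrix (Fin n) (Fin p) ℂ →ₗ[ℂ] (Fin m → ℂ)) (M : Fin m → ℂ) (γ : ℝ) (hγ : 0 < γ) (K : ℕ)
    (X : ℕ → Matrix (Fin n) (Fin p) ℂ) (W : ℕ → Matrix (Fin n) (Fin n) ℂ) (ε : ℕ → ℝ)
    (halg : IsIRLSM S M γ K X W ε) :
    ∃ A : ℝ, 0 < A ∧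
      (∀ ℓ : ℕ, 1 ≤ ℓ →
        frobNorm (X (ℓ + 1) - X ℓ) ^ 2 ≤
          2 * A * (Jfun (X ℓ) (W ℓ) - Jfun (X (ℓ + 1)) (W (ℓ + 1)))) ∧
      Summable (fun ℓ : ℕ => frobNorm (X (ℓ + 1) - X ℓ) ^ 2) ∧
      Filter.Tendsto (fun ℓ : ℕ => frobNorm (X (ℓ + 1) - X ℓ)) Filter.atTop (nhds 0) := by
  set J : ℕ → ℝ := fun ℓ => Jfun (X ℓ) (W ℓ)
  have hJ_le : ∀ ℓ, J (ℓ + 1) ≤ J 1 := fun ℓ => by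
    induction ℓ with
    | zero => exact le_rfl
    | succ ℓ ih => exact (halg.Jfun_succ_le hγ.le ℓ).trans ih
  have hstep : ∀ ℓ, frobNorm (X (ℓ + 2) - X (ℓ + 1)) ^ 2 ≤
      2 * (2 * J 1 + 1) * (J (ℓ + 1) - J (ℓ + 2)) := fun ℓ => by
    have hdecr : 0 ≤ J (ℓ + 1) - J (ℓ + 2) := sub_nonneg.2 (halg.Jfun_succ_le hγ.le ℓ)
    nlinarith [halg.frobNorm_sub_sq_le hγ.le ℓ, hJ_le ℓ]
  -- The `+ 1` keeps the constant positive: `𝒥` vanishes identically when `n = 0`.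
  have hA : 0 < 2 * J 1 + 1 := by linarith [Jfun_nonneg (X 1) (W 1)]
  have hsum : Summable (fun ℓ : ℕ => frobNorm (X (ℓ + 1) - X ℓ) ^ 2) :=
    (summable_nat_add_iff 1).1 <| summable_of_le_mul_sub_succ (by linarith)
      (fun _ => sq_nonneg _) (fun ℓ => Jfun_nonneg _ _) hstep
  refine ⟨2 * J 1 + 1, hA, fun ℓ hℓ => ?_, hsum, ?_⟩
  · obtain ⟨ℓ, rfl⟩ := Nat.exists_eq_add_of_le' hℓ
    exact hstep ℓ
  · simpa [Real.sqrt_sq (frobNorm_nonneg _)] using hsum.tendsto_atTop_zero.sqrt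

/-- `‖X^(ℓ+1) − X^ℓ‖_F² ≤ 2𝒜 (𝒥(X^ℓ,W^ℓ) − 𝒥(X^(ℓ+1),W^(ℓ+1)))`; in
particular the squared increments are summable and the increments tend to `0`. -/
theorem statement7 {n p m : ℕ} (hnp : n ≤ p)
    (S : Matrix (Fin n) (Fin p) ℂ →ₗ[ℂ] (Fin m → ℂ)) (M : Fin m → ℂ) (γ : ℝ) (hγ : 0 < γ) (K : ℕ)
    (X : ℕ → Matrix (Fin n) (Fin p) ℂ) (W : ℕ → Matrix (Fin n) (Fin n) ℂ) (ε : ℕ → ℝ)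
    (halg : IsIRLSM S M γ K X W ε) :
    ∃ A : ℝ, 0 < A ∧
      (∀ ℓ : ℕ, 1 ≤ ℓ →
        frobNorm (X (ℓ + 1) - X ℓ) ^ 2 ≤
          2 * A * (Jfun (X ℓ) (W ℓ) - Jfun (X (ℓ + 1)) (W (ℓ + 1)))) ∧
      Summable (fun ℓ : ℕ => frobNorm (X (ℓ + 1) - X ℓ) ^ 2) ∧
      Filter.Tendsto (fun ℓ : ℕ => frobNorm (X (ℓ + 1) - X ℓ)) Filter.atTop (nhds 0) :=
  statement7_general S M γ hγ K X W ε halg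

end IRLSM
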